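/- arXiv:math/0303047 — 3 statements merged into one kernel-verified Lean document; each statement's English description precedes it below -/
import Mathlib

section
/- For any nontrivial m-th root of unity z and any positive integers k and r, the polylogarithm function L_{k+1}(z) = Re((1/i^k) ∑_{n≥1} z^n / n^{k+1}) satisfies the distribution (transfer) relation L_{k+1}(z) = r^k · ∑_{ζ : ζ^r = z} L_{k+1}(ζ), where the sum runs over all r-th roots ζ of z. -/
open Complex Polynomial Finset

/-- The polylogarithm-type function `L_{k+1}(z) = Re((1/i^k) ∑_{n≥1} z^n / n^{k+1})`. -/
noncomputable def polylogL (k : ℕ) (z : ℂ) : ℝ :=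
  ((Complex.I ^ k)⁻¹ * ∑' n : ℕ, z ^ (n + 1) / ((n : ℂ) + 1) ^ (k + 1)).re

lemma summable_aux (k : ℕ) (hk : 0 < k) (ζ : ℂ) (hζ : ‖ζ‖ = 1) :
    Summable (fun n : ℕ => ζ ^ (n + 1) / ((n : ℂ) + 1) ^ (k + 1)) := by
  apply Summable.of_norm
  have hs : Summable (fun n : ℕ => 1 / ((n : ℝ) + 1) ^ 2) := by
    have := (Real.summable_one_div_nat_pow (p := 2)).mpr one_lt_two
    have := (summable_nat_add_iff (f := fun n : ℕ => 1 / (n : ℝ) ^ 2) 1).mpr this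
    simpa [add_comm] using this
  apply hs.of_nonneg_of_le (fun n => norm_nonneg _)
  intro n
  have h1 : (0:ℝ) < (n : ℝ) + 1 := by positivity
  have h2 : ‖((n : ℂ) + 1)‖ = (n : ℝ) + 1 := by
    rw [show ((n : ℂ) + 1) = ((n + 1 : ℕ) : ℂ) by push_cast; ring]
    rw [Complex.norm_natCast]; push_cast; ring
  rw [norm_div, norm_pow, norm_pow]
  simp only [hζ, h2, one_pow]
  rw [div_le_div_iff₀ (by positivity) (by positivity)]
  have : ((n:ℝ)+1) ^ 2 ≤ ((n:ℝ)+1) ^ (k+1) :=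
    pow_le_pow_right₀ (by linarith) (by omega)
  linarith

/-- Distribution (transfer) relation for the polylogarithm: for a nontrivial `m`-th root of
unity `z` and positive integers `k`, `r`,
`L_{k+1}(z) = r^k · ∑_{ζ^r = z} L_{k+1}(ζ)`, the sum being over all `r`-th roots `ζ` of `z`. -/
theorem polylog_distribution (m k r : ℕ) (hm : 0 < m) (hk : 0 < k) (hr : 0 < r)
    (z : ℂ) (hzm : z ^ m = 1) (hz1 : z ≠ 1) :
    polylogL k z = (r : ℝ) ^ k * ((Polynomial.nthRoots r z).map (polylogL k)).sum := by
  -- |z| = 1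
  have hz0 : z ≠ 0 := fun h => by simp [h, zero_pow hm.ne'] at hzm
  have habs : ‖z‖ = 1 := Complex.norm_eq_one_of_pow_eq_one hzm hm.ne'
  -- primitive root and one r-th root of z
  obtain ⟨α, hα⟩ := IsAlgClosed.exists_pow_nat_eq z hr
  have hω := Complex.isPrimitiveRoot_exp r hr.ne'
  set ω := Complex.exp (2 * Real.pi * Complex.I / r) with hωdef
  have hroots : Polynomial.nthRoots r z = (Multiset.range r).map (fun i => ω ^ i * α) :=
    hω.nthRoots_eq hα
  have habsα : ‖α‖ = 1 := by
    have : (α / 1) ^ (r * m) = 1 := by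
      rw [div_one, pow_mul, hα, hzm]
    have := Complex.norm_eq_one_of_pow_eq_one (by rw [div_one] at this; exact this) (by positivity)
    simpa using this
  have habsroot : ∀ i : ℕ, ‖ω ^ i * α‖ = 1 := by
    intro i
    have : ‖ω‖ = 1 := Complex.norm_eq_one_of_pow_eq_one hω.pow_eq_one hr.ne'
    simp [map_mul, map_pow, this, habsα]
  -- main complex identity
  have key : (∑ i ∈ Finset.range r, ∑' n : ℕ, (ω ^ i * α) ^ (n + 1) / ((n : ℂ) + 1) ^ (k + 1))
      = ((r : ℂ) ^ k)⁻¹ * ∑' n : ℕ, z ^ (n + 1) / ((n : ℂ) + 1) ^ (k + 1) := by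
    rw [← Summable.tsum_finsetSum (fun i _ => summable_aux k hk _ (habsroot i))]
    -- pointwise: sum over roots
    have hpt : ∀ n : ℕ, (∑ i ∈ Finset.range r, (ω ^ i * α) ^ (n + 1) / ((n : ℂ) + 1) ^ (k + 1))
        = (if r ∣ (n + 1) then (r : ℂ) * z ^ ((n + 1) / r) / ((n : ℂ) + 1) ^ (k + 1) else 0) := by
      intro n
      rw [← Finset.sum_div]
      have : ∑ i ∈ Finset.range r, (ω ^ i * α) ^ (n + 1)
          = α ^ (n + 1) * ∑ i ∈ Finset.range r, (ω ^ (n + 1)) ^ i := by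
        rw [Finset.mul_sum]
        congr 1; ext i; rw [mul_pow, ← pow_mul, ← pow_mul, mul_comm i (n+1)]; ring
      rw [this]
      by_cases hd : r ∣ (n + 1)
      · simp only [hd, if_true]
        have h1 : ω ^ (n + 1) = 1 := (hω.pow_eq_one_iff_dvd _).mpr hd
        have h2 : α ^ (n + 1) = z ^ ((n + 1) / r) := by
          obtain ⟨c, hc⟩ := hd
          rw [hc, pow_mul, hα, Nat.mul_div_cancel_left c hr]
        rw [h1, h2]; simp [mul_comm]
      · simp only [hd, if_false]
        have h1 : ω ^ (n + 1) ≠ 1 := fun h => hd ((hω.pow_eq_one_iff_dvd _).mp h)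
        have h2 : (ω ^ (n + 1)) ^ r = 1 := by
          rw [← pow_mul, mul_comm, pow_mul, hω.pow_eq_one, one_pow]
        rw [geom_sum_eq h1, h2]
        simp
    rw [tsum_congr hpt]
    -- reindex via n ↦ r*n + (r-1)
    have hinj : Function.Injective (fun n : ℕ => r * n + (r - 1)) := by
      intro a b h
      simp only at h
      have : r * a = r * b := by omega
      exact Nat.eq_of_mul_eq_mul_left hr this
    rw [← hinj.tsum_eq ?_]
    · have : ∀ n : ℕ, (if r ∣ (r * n + (r-1) + 1) then
          (r : ℂ) * z ^ ((r * n + (r-1) + 1) / r) / (((r * n + (r-1) : ℕ) : ℂ) + 1) ^ (k + 1) else 0)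
          = ((r:ℂ)^k)⁻¹ * (z ^ (n + 1) / ((n : ℂ) + 1) ^ (k + 1)) := by
        intro n
        have he : r * n + (r - 1) + 1 = r * (n + 1) := by
          have h9 : r * (n + 1) = r * n + r := by ring
          omega
        have hd : r ∣ (r * n + (r-1) + 1) := ⟨n + 1, he⟩
        rw [if_pos hd, he, Nat.mul_div_cancel_left _ hr]
        have hc : (((r * n + (r-1) : ℕ) : ℂ) + 1) = (r : ℂ) * ((n : ℂ) + 1) := by
          have : ((r * n + (r-1) : ℕ) : ℂ) + 1 = ((r * (n+1) : ℕ) : ℂ) := by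
            rw [← he]; push_cast; ring
          rw [this]; push_cast; ring
        rw [hc, mul_pow]
        have hrC : (r : ℂ) ≠ 0 := Nat.cast_ne_zero.mpr hr.ne'
        have hA : ((n : ℂ) + 1) ≠ 0 := by
          rw [show ((n:ℂ)+1) = ((n+1:ℕ):ℂ) by push_cast; ring]
          exact Nat.cast_ne_zero.mpr (by omega)
        rw [pow_succ (r:ℂ) k]
        field_simp
      rw [tsum_congr this, tsum_mul_left]
    · intro n hn
      simp only [Function.mem_support] at hn
      by_cases hd : r ∣ (n + 1)
      · obtain ⟨c, hc⟩ := hd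
        have hc0 : 0 < c := Nat.pos_of_ne_zero (fun h => by simp [h] at hc)
        have h4 : r * c = r * (c - 1) + r := by
          conv_lhs => rw [show c = (c - 1) + 1 by omega]
          ring
        refine ⟨c - 1, ?_⟩
        show r * (c - 1) + (r - 1) = n
        omega
      · exact absurd (if_neg hd) hn
  -- assemble
  rw [hroots, Multiset.map_map]
  have hsum : ((Multiset.range r).map (polylogL k ∘ fun i => ω ^ i * α)).sum
      = ∑ i ∈ Finset.range r, polylogL k (ω ^ i * α) := rfl
  rw [hsum]
  unfold polylogL
  rw [← Complex.re_sum]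
  have : ∑ i ∈ Finset.range r, (Complex.I ^ k)⁻¹ * ∑' n : ℕ, (ω ^ i * α) ^ (n + 1) / ((n : ℂ) + 1) ^ (k + 1)
      = (Complex.I ^ k)⁻¹ * ((r : ℂ) ^ k)⁻¹ * ∑' n : ℕ, z ^ (n + 1) / ((n : ℂ) + 1) ^ (k + 1) := by
    rw [← Finset.mul_sum, key]; ring
  rw [this]
  have hre : ((r:ℝ)^k : ℝ) * ((Complex.I ^ k)⁻¹ * ((r : ℂ) ^ k)⁻¹ * ∑' n : ℕ, z ^ (n + 1) / ((n : ℂ) + 1) ^ (k + 1)).re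
      = ((((r:ℝ)^k : ℝ) : ℂ) * ((Complex.I ^ k)⁻¹ * ((r : ℂ) ^ k)⁻¹ * ∑' n : ℕ, z ^ (n + 1) / ((n : ℂ) + 1) ^ (k + 1))).re := by
    rw [Complex.re_ofReal_mul]
  rw [hre]
  congr 1
  have hrC : (r : ℂ) ≠ 0 := Nat.cast_ne_zero.mpr hr.ne'
  push_cast
  field_simp
end

section
/- Let D = d + A_0 + A_1 + A_2 be a ℤ-graded superconnection of total degree 1 on a two-term complex over a manifold, i.e., A_0 is a 0-form valued in degree −1 endomorphisms, A_1 a 1-form valued in degree 0 endomorphisms, A_2 a 2-form valued in degree 1 endomorphisms, satisfying (1) dA_0 = A_0 A_1 − A_1 A_0 and (2) −dA_1 = A_0 A_2 + A_1² + A_2 A_0. Then automatically dA_2 = −A_1 A_2 + A_2 A_1, provided A_0 is invertible as a map from the degree 1 to the degree 0 summand (equivalently, the complex is acyclic). -/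
/-!
Differentiating the flatness equation (2) and substituting (1) and (2) back in shows that
`Z = dA₂ + A₁A₂ − A₂A₁` anticommutes with `A₀`. Since `Z` maps the degree 0 summand to the
degree 1 summand, a left inverse `B` of `A₀` kills `Z`, and then `Z = BA₀Z = −BZA₀ = 0`.
-/

section Corner

variable {R : Type*} [Ring R]

theorem mul_eq_self_of_mul_mul_eq {e f x : R} (he : IsIdempotentElem e) (hx : e * x * f = x) :
    e * x = x := by
  rw [← hx, ← mul_assoc, ← mul_assoc, he.eq]

theorem commute_of_add_corners_eq {e₀ e₁ a : R} (he₁ : IsIdempotentElem e₁)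
    (he₀₁ : e₀ * e₁ = 0) (he₁₀ : e₁ * e₀ = 0) (ha : e₀ * a * e₀ + e₁ * a * e₁ = a) :
    Commute e₁ a := by
  have hleft : e₁ * a = e₁ * a * e₁ := by
    conv_lhs => rw [← ha]
    simp only [mul_add, ← mul_assoc, he₁₀, he₁.eq, zero_mul, zero_add]
  have hright : a * e₁ = e₁ * a * e₁ := by
    conv_lhs => rw [← ha]
    simp only [add_mul, mul_assoc, he₀₁, he₁.eq, mul_zero, zero_add]
  exact hleft.trans hright.symm

theorem eq_zero_of_mul_add_mul_eq_zero {e a b z : R} (hbe : b * e = 0) (hba : b * a = e)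
    (hz : e * z = z) (h : a * z + z * a = 0) : z = 0 := by
  have hbz : b * z = 0 := by rw [← hz, ← mul_assoc, hbe, zero_mul]
  calc z = e * z := hz.symm
    _ = b * (a * z + z * a) := by
      rw [mul_add, ← mul_assoc, hba, ← mul_assoc, hbz, zero_mul, add_zero]
    _ = 0 := by rw [h, mul_zero]

end Corner

theorem mul_add_mul_eq_zero_of_flat {R : Type*} [Ring R] (d : R →+ R) {A₀ A₁ A₂ : R}
    (hdd : d (d A₁) = 0)
    (hL02 : d (A₀ * A₂) = d A₀ * A₂ + A₀ * d A₂)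
    (hL11 : d (A₁ * A₁) = d A₁ * A₁ - A₁ * d A₁)
    (hL20 : d (A₂ * A₀) = d A₂ * A₀ + A₂ * d A₀)
    (heq1 : d A₀ = A₀ * A₁ - A₁ * A₀)
    (heq2 : - d A₁ = A₀ * A₂ + A₁ * A₁ + A₂ * A₀) :
    A₀ * (d A₂ + A₁ * A₂ - A₂ * A₁) + (d A₂ + A₁ * A₂ - A₂ * A₁) * A₀ = 0 := by
  have hdA₁ : d A₁ = -(A₀ * A₂ + A₁ * A₁ + A₂ * A₀) := by rw [← heq2, neg_neg]
  have hd_heq2 : d (A₀ * A₂) + d (A₁ * A₁) + d (A₂ * A₀) = 0 := by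
    simpa only [map_neg, hdd, neg_zero, map_add, eq_comm] using congrArg d heq2
  rw [hL02, hL11, hL20, heq1, hdA₁] at hd_heq2
  rw [← hd_heq2]
  noncomm_ring

theorem superconnection_top_form_general (A : Type) [Ring A] (d : A →+ A) (A0 A1 A2 e0 e1 : A)
    (he11 : e1 * e1 = e1)
    (he01 : e0 * e1 = 0) (he10 : e1 * e0 = 0)
    (hA1blk : e0 * A1 * e0 + e1 * A1 * e1 = A1)
    (hA2blk : e1 * A2 * e0 = A2)
    (hde1l : ∀ x, d (e1 * x) = e1 * d x)
    (hdd : d (d A1) = 0)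
    (hL02 : d (A0 * A2) = d A0 * A2 + A0 * d A2)
    (hL11 : d (A1 * A1) = d A1 * A1 - A1 * d A1)
    (hL20 : d (A2 * A0) = d A2 * A0 + A2 * d A0)
    (heq1 : d A0 = A0 * A1 - A1 * A0)
    (heq2 : - d A1 = A0 * A2 + A1 * A1 + A2 * A0)
    (hA0inv : ∃ B : A, e1 * B * e0 = B ∧ A0 * B = e0 ∧ B * A0 = e1) :
    d A2 = - (A1 * A2) + A2 * A1 := by
  obtain ⟨B, hBblk, -, hBA0⟩ := hA0inv
  have hA2 : e1 * A2 = A2 := mul_eq_self_of_mul_mul_eq he11 hA2blk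
  have hA1 : Commute e1 A1 := commute_of_add_corners_eq he11 he01 he10 hA1blk
  have hdA2 : e1 * d A2 = d A2 := by rw [← hde1l, hA2]
  have hA1A2 : e1 * (A1 * A2) = A1 * A2 := by rw [← mul_assoc, hA1.eq, mul_assoc, hA2]
  have hA2A1 : e1 * (A2 * A1) = A2 * A1 := by rw [← mul_assoc, hA2]
  have hBe1 : B * e1 = 0 := by rw [← hBblk, mul_assoc, he01, mul_zero]
  have hZ : d A2 + A1 * A2 - A2 * A1 = 0 :=
    eq_zero_of_mul_add_mul_eq_zero hBe1 hBA0
      (by rw [mul_sub, mul_add, hdA2, hA1A2, hA2A1])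
      (mul_add_mul_eq_zero_of_flat d hdd hL02 hL11 hL20 heq1 heq2)
  rw [← sub_eq_zero, ← hZ]
  abel

/-- A flat ℤ-graded superconnection `D = d + A_0 + A_1 + A_2` of total degree 1 on an acyclic
two-term complex.  We work in the ring `A` of endomorphism-valued differential forms, with
`d` the (additive) exterior differential and `e0, e1` the complementary idempotent projections
onto the degree `0` and degree `1` summands of the complex; `A_0` (a 0-form, degree `−1`
endomorphism), `A_1` (a 1-form, degree `0`), `A_2` (a 2-form, degree `1`) are block matrices
with respect to `e0, e1`.  The Leibniz rules for the relevant products and `d² = 0` are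
recorded as hypotheses.  Given the flatness equations
(1) `dA_0 = A_0 A_1 − A_1 A_0` and (2) `−dA_1 = A_0 A_2 + A_1² + A_2 A_0`,
and assuming `A_0` is invertible as a map from the degree 1 summand to the degree 0 summand
(i.e. the complex is acyclic), then automatically `dA_2 = −A_1 A_2 + A_2 A_1`. -/
theorem superconnection_top_form (A : Type) [Ring A] (d : A →+ A) (A0 A1 A2 e0 e1 : A)
    (he : e0 + e1 = 1) (he00 : e0 * e0 = e0) (he11 : e1 * e1 = e1)
    (he01 : e0 * e1 = 0) (he10 : e1 * e0 = 0)
    (hA0blk : e0 * A0 * e1 = A0) (hA1blk : e0 * A1 * e0 + e1 * A1 * e1 = A1)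
    (hA2blk : e1 * A2 * e0 = A2)
    (hde0l : ∀ x, d (e0 * x) = e0 * d x) (hde0r : ∀ x, d (x * e0) = d x * e0)
    (hde1l : ∀ x, d (e1 * x) = e1 * d x) (hde1r : ∀ x, d (x * e1) = d x * e1)
    (hdd : d (d A1) = 0)
    (hL02 : d (A0 * A2) = d A0 * A2 + A0 * d A2)
    (hL11 : d (A1 * A1) = d A1 * A1 - A1 * d A1)
    (hL20 : d (A2 * A0) = d A2 * A0 + A2 * d A0)
    (heq1 : d A0 = A0 * A1 - A1 * A0)
    (heq2 : - d A1 = A0 * A2 + A1 * A1 + A2 * A0)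
    (hA0inv : ∃ B : A, e1 * B * e0 = B ∧ A0 * B = e0 ∧ B * A0 = e1) :
    d A2 = - (A1 * A2) + A2 * A1 :=
  superconnection_top_form_general A d A0 A1 A2 e0 e1 he11 he01 he10 hA1blk hA2blk hde1l hdd hL02
    hL11 hL20 heq1 heq2 hA0inv
end

section
/- Uniqueness characterization of the polylogarithm: a continuous function F on U(1) ∖ {1} satisfying F(z) = m^k ∑_{ζ^m = z} F(ζ) for all integers m ≥ 1 and all z ≠ 1, and which is given by an absolutely convergent Fourier series F(z) = Re(∑_{n≥1} a_n z^n) with a_n ∈ ℂ, must satisfy a_n = a_1 / n^{k+1} for all n ≥ 1; i.e., F is a scalar multiple of L_{k+1}. -/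
/-!
Write `F(z) = Re P(z)` with `P(z) = ∑ c n zⁿ`, `c 0 = 0`. Summing `ζⁿ` over the `m`-th roots `ζ`
of `z` gives `m z^(n/m)` if `m ∣ n` and `0` otherwise, so `∑_{ζ^m = z} P(ζ) = m ∑ c (m n) zⁿ`, and
the distribution relation says that the power series with coefficients `c n - m^(k+1) c (m n)`
has vanishing real part on the unit circle (off `z = 1`). Viewing it as an absolutely convergent
Fourier series on `ℝ/ℤ`, its real part has `n`-th Fourier coefficient half the `n`-th coefficient
of the series for `n ≥ 1`, so all these coefficients vanish; at `n = 1` this is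
`a 1 = m^(k+1) a m`.
-/

open AddCircle MeasureTheory ComplexConjugate Polynomial

section Fourier

variable {T : ℝ}

theorem fourier_natCast_apply (k : ℕ) (x : AddCircle T) :
    fourier k x = (toCircle x : ℂ) ^ k := by
  rw [fourier_apply, natCast_zsmul, toCircle_nsmul, Circle.coe_pow]

variable [hT : Fact (0 < T)]

theorem haarAddCircle_singleton (x : AddCircle T) : haarAddCircle {x} = 0 := by
  have h := volume_closedBall (T := T) (x := x) 0
  rw [Metric.closedBall_zero, mul_zero, min_eq_right hT.out.le, ENNReal.ofReal_zero,
    volume_eq_smul_haarAddCircle, Measure.smul_apply, smul_eq_mul, mul_eq_zero] at h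
  exact h.resolve_left (ENNReal.ofReal_pos.2 hT.out).ne'

theorem fourierCoeff_conj (f : AddCircle T → ℂ) (n : ℤ) :
    fourierCoeff (fun x => conj (f x)) n = conj (fourierCoeff f (-n)) := by
  simp only [fourierCoeff, ← integral_conj, smul_eq_mul, map_mul, neg_neg, fourier_neg]

theorem fourierCoeff_tsum_mul_fourier {ι : Type*} [Countable ι] {c : ι → ℂ}
    (hc : Summable fun i => ‖c i‖) (ν : ι → ℤ) (n : ℤ) :
    fourierCoeff (T := T) (fun x => ∑' i, c i * fourier (ν i) x) n =
      ∑' i, if ν i = n then c i else 0 := by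
  have hcont : ∀ i, Continuous fun t : AddCircle T => fourier (-n) t * (c i * fourier (ν i) t) :=
    fun i => by fun_prop
  have hnorm : ∀ i (t : AddCircle T), ‖fourier (-n) t * (c i * fourier (ν i) t)‖ = ‖c i‖ :=
    fun i t => by simp [fourier_apply, Circle.norm_coe]
  simp only [fourierCoeff, smul_eq_mul, ← tsum_mul_left]
  rw [← integral_tsum_of_summable_integral_norm
    (fun i => (hcont i).integrable_of_hasCompactSupport (HasCompactSupport.of_compactSpace _))
    (by simp only [hnorm]; simpa using hc)]
  congr 1 with i
  have hfourier := congrFun (fourierCoeff_fourier (T := T) (ν i)) n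
  simp only [fourierCoeff, smul_eq_mul] at hfourier
  simp_rw [mul_left_comm _ (c i), integral_const_mul, hfourier, Pi.single_apply,
    eq_comm (a := n)]
  split_ifs <;> simp

end Fourier

theorem coeff_eq_zero_of_re_tsum_eq_zero {b : ℕ → ℂ} (hb : Summable fun k => ‖b k‖)
    (h : ∀ z : ℂ, ‖z‖ = 1 → z ≠ 1 → (∑' k, b k * z ^ k).re = 0) {n : ℕ} (hn : n ≠ 0) :
    b n = 0 := by
  have : Fact ((0 : ℝ) < 1) := ⟨one_pos⟩
  set P : UnitAddCircle → ℂ := fun x => ∑' k : ℕ, b k * fourier k x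
  have hP : Continuous P :=
    continuous_tsum (fun k => by fun_prop) hb fun k x => by simp [Circle.norm_coe]
  have hvanish : ∀ x ≠ 0, P x + conj (P x) = 0 := by
    intro x hx0
    have hx1 : (toCircle x : ℂ) ≠ 1 := fun h1 =>
      hx0 (injective_toCircle one_ne_zero (Circle.ext (h1.trans (by simp))))
    simp only [Complex.add_conj, P, fourier_natCast_apply, h _ (Circle.norm_coe _) hx1,
      mul_zero, Complex.ofReal_zero]
  have hae : P + (fun x => conj (P x)) =ᵐ[haarAddCircle] 0 :=
    measure_mono_null (fun x hx => by_contra fun hx0 => hx (hvanish x hx0))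
      (haarAddCircle_singleton 0)
  -- `P` has no negative frequencies, so `conj ∘ P` contributes nothing to the `n`-th coefficient.
  have hpos : fourierCoeff P n = b n := by
    rw [fourierCoeff_tsum_mul_fourier hb Nat.cast]
    simp
  have hneg : fourierCoeff P (-n) = 0 := by
    rw [fourierCoeff_tsum_mul_fourier hb Nat.cast]
    simp [hn]
  have hcoeff := congrFun (fourierCoeff_congr_ae hae) n
  rw [fourierCoeff.add (g := fun x => conj (P x))
    (hP.integrable_of_hasCompactSupport (HasCompactSupport.of_compactSpace _))
    ((Complex.continuous_conj.comp hP).integrable_of_hasCompactSupport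
      (HasCompactSupport.of_compactSpace _)),
    Pi.add_apply, fourierCoeff_conj, hpos, hneg, map_zero, add_zero] at hcoeff
  simpa [fourierCoeff] using hcoeff

theorem Multiset.hasSum_sum_map {α β M : Type*} [AddCommMonoid M] [TopologicalSpace M]
    [ContinuousAdd M] {f : α → β → M} {a : α → M} (s : Multiset α)
    (hf : ∀ x ∈ s, HasSum (f x) (a x)) :
    HasSum (fun b => (s.map fun x => f x b).sum) (s.map a).sum := by
  induction s using Multiset.induction_on with
  | empty => simp [hasSum_zero]
  | cons x s ih =>
    simpa only [Multiset.map_cons, Multiset.sum_cons] using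
      (hf x (mem_cons_self x s)).add (ih fun y hy => hf y (mem_cons_of_mem hy))

theorem tsum_ite_dvd {M : Type*} [AddCommMonoid M] [TopologicalSpace M] {m : ℕ} (hm : m ≠ 0)
    (f : ℕ → M) : ∑' n, (if m ∣ n then f n else 0) = ∑' j, f (m * j) := by
  rw [← (mul_right_injective₀ hm).tsum_eq]
  · simp
  · intro n hn
    by_contra hnm
    exact hn (if_neg fun ⟨j, hj⟩ => hnm ⟨j, hj.symm⟩)

theorem IsPrimitiveRoot.sum_map_nthRoots_pow {R : Type*} [CommRing R] [IsDomain R] {m : ℕ}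
    {ζ α z : R} (hζ : IsPrimitiveRoot ζ m) (hα : α ^ m = z) (n : ℕ) :
    ((nthRoots m z).map (· ^ n)).sum = if m ∣ n then m * z ^ (n / m) else 0 := by
  have hpow : ∀ j, (ζ ^ j * α) ^ n = (ζ ^ n) ^ j * α ^ n := fun j => by ring
  rw [hζ.nthRoots_eq hα, Multiset.map_map, Function.comp_def, ← Finset.range_val,
    ← Finset.sum_eq_multiset_sum]
  simp only [hpow, ← Finset.sum_mul]
  split_ifs with hmn
  · obtain ⟨j, rfl⟩ := hmn
    rw [(hζ.pow_eq_one_iff_dvd _).2 (dvd_mul_right m j)]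
    obtain rfl | hm := eq_or_ne m 0
    · simp
    · simp [Nat.mul_div_cancel_left j (Nat.pos_of_ne_zero hm), pow_mul, hα]
  · have hne : ζ ^ n - 1 ≠ 0 := sub_ne_zero.2 fun h => hmn ((hζ.pow_eq_one_iff_dvd n).1 h)
    have hgeom := geom_sum_mul (ζ ^ n) m
    rw [pow_right_comm, hζ.pow_eq_one, one_pow, sub_self] at hgeom
    rw [(mul_eq_zero.1 hgeom).resolve_right hne, zero_mul]

theorem norm_eq_one_of_mem_nthRoots {K : Type*} [NormedField K] {m : ℕ} (hm : m ≠ 0) {z w : K}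
    (hz : ‖z‖ = 1) (hw : w ∈ nthRoots m z) : ‖w‖ = 1 := by
  rw [mem_nthRoots (Nat.pos_of_ne_zero hm)] at hw
  rwa [← pow_eq_one_iff_of_nonneg (norm_nonneg w) hm, ← norm_pow, hw]

theorem summable_mul_pow_of_norm_le_one {R : Type*} [NormedDivisionRing R] [CompleteSpace R]
    {c : ℕ → R} (hc : Summable fun n => ‖c n‖) {z : R} (hz : ‖z‖ ≤ 1) :
    Summable fun n => c n * z ^ n :=
  Summable.of_norm_bounded hc fun n => by
    rw [norm_mul, norm_pow]
    exact mul_le_of_le_one_right (norm_nonneg _) (pow_le_one₀ (norm_nonneg z) hz)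

theorem sum_map_nthRoots_tsum_mul_pow {c : ℕ → ℂ} (hc : Summable fun n => ‖c n‖) {m : ℕ}
    (hm : m ≠ 0) {z : ℂ} (hz : ‖z‖ = 1) :
    ((nthRoots m z).map fun w => ∑' n, c n * w ^ n).sum = m * ∑' n, c (m * n) * z ^ n := by
  obtain ⟨α, hα⟩ := IsAlgClosed.exists_pow_nat_eq z (Nat.pos_of_ne_zero hm)
  have hζ := Complex.isPrimitiveRoot_exp m hm
  have hsum := Multiset.hasSum_sum_map (nthRoots m z) fun w hw =>
    (summable_mul_pow_of_norm_le_one hc (norm_eq_one_of_mem_nthRoots hm hz hw).le).hasSum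
  calc _ = ∑' n, c n * ((nthRoots m z).map (· ^ n)).sum := by
        simp_rw [← hsum.tsum_eq, Multiset.sum_map_mul_left]
    _ = ∑' n, if m ∣ n then c n * (m * z ^ (n / m)) else 0 := by
        simp_rw [hζ.sum_map_nthRoots_pow hα, mul_ite, mul_zero]
    _ = m * ∑' n, c (m * n) * z ^ n := by
        rw [tsum_ite_dvd hm, ← tsum_mul_left]
        simp [Nat.mul_div_cancel_left _ (Nat.pos_of_ne_zero hm), mul_left_comm]

section Distribution

variable {c : ℕ → ℂ} {F : ℂ → ℝ}

theorem sum_map_nthRoots_of_eq_re_tsum (hc : Summable fun n => ‖c n‖)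
    (hF : ∀ z : ℂ, ‖z‖ = 1 → F z = (∑' n, c n * z ^ n).re) {m : ℕ} (hm : m ≠ 0) {z : ℂ}
    (hz : ‖z‖ = 1) : ((nthRoots m z).map F).sum = ((m : ℂ) * ∑' n, c (m * n) * z ^ n).re := by
  rw [← sum_map_nthRoots_tsum_mul_pow hc hm hz,
    Multiset.map_congr rfl fun w hw => hF w (norm_eq_one_of_mem_nthRoots hm hz hw)]
  exact ((map_multiset_sum Complex.reAddGroupHom _).trans
    (congrArg Multiset.sum (Multiset.map_map _ _ _))).symm

theorem coeff_eq_pow_mul_coeff_of_distribution (hc : Summable fun n => ‖c n‖)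
    (hF : ∀ z : ℂ, ‖z‖ = 1 → F z = (∑' n, c n * z ^ n).re) (k : ℕ) {m : ℕ} (hm : m ≠ 0)
    (hdist : ∀ z : ℂ, ‖z‖ = 1 → z ≠ 1 → F z = (m : ℝ) ^ k * ((nthRoots m z).map F).sum)
    {n : ℕ} (hn : n ≠ 0) : c n = (m : ℂ) ^ (k + 1) * c (m * n) := by
  have hcm : Summable fun n => ‖c (m * n)‖ := hc.comp_injective (mul_right_injective₀ hm)
  have hsummable : Summable fun n => ‖c n - (m : ℂ) ^ (k + 1) * c (m * n)‖ :=
    (hc.add (hcm.mul_left ‖(m : ℂ) ^ (k + 1)‖)).of_nonneg_of_le (fun _ => norm_nonneg _)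
      fun n => (norm_sub_le _ _).trans_eq (by rw [norm_mul])
  refine sub_eq_zero.1 (coeff_eq_zero_of_re_tsum_eq_zero hsummable (fun z hz hz1 => ?_) hn)
  simp_rw [sub_mul, mul_assoc]
  rw [(summable_mul_pow_of_norm_le_one hc hz.le).tsum_sub
      ((summable_mul_pow_of_norm_le_one hcm hz.le).mul_left _), tsum_mul_left,
    Complex.sub_re, ← hF z hz, hdist z hz hz1, sum_map_nthRoots_of_eq_re_tsum hc hF hm hz,
    pow_succ, mul_assoc, ← Complex.re_ofReal_mul, sub_eq_zero]
  norm_cast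

end Distribution

theorem polylog_uniqueness_general (k : ℕ) (a : ℕ → ℂ)
    (hsum : Summable fun n : ℕ => ‖a n‖)
    (F : ℂ → ℝ)
    (hF : ∀ z : ℂ, F z = (∑' n : ℕ, a (n + 1) * z ^ (n + 1)).re)
    (hdist : ∀ m : ℕ, 1 ≤ m → ∀ z : ℂ, ‖z‖ = 1 → z ≠ 1 →
      F z = (m : ℝ) ^ k * ((Polynomial.nthRoots m z).map F).sum) :
    ∀ n : ℕ, 1 ≤ n → a n = a 1 / (n : ℂ) ^ (k + 1) := by
  set c : ℕ → ℂ := Function.update a 0 0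
  have hc : Summable fun n => ‖c n‖ :=
    hsum.of_nonneg_of_le (fun _ => norm_nonneg _) fun n => by
      rcases n with _ | n <;> simp [c]
  have hFc : ∀ z : ℂ, ‖z‖ = 1 → F z = (∑' n, c n * z ^ n).re := fun z hz => by
    rw [hF, (summable_mul_pow_of_norm_le_one hc hz.le).tsum_eq_zero_add]
    simp [c]
  intro n hn
  have hn0 : n ≠ 0 := Nat.one_le_iff_ne_zero.1 hn
  have hscale := coeff_eq_pow_mul_coeff_of_distribution hc hFc k hn0 (hdist n hn) one_ne_zero
  simp only [c, mul_one, Function.update_of_ne one_ne_zero, Function.update_of_ne hn0] at hscale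
  rw [hscale, mul_div_cancel_left₀ _ (pow_ne_zero _ (Nat.cast_ne_zero.2 hn0))]

/-- Uniqueness characterization of the polylogarithm.  Fix `k ≥ 1`.  Let `F` be a function on
the unit circle given by an absolutely convergent Fourier series `F(z) = Re(∑_{n≥1} a_n z^n)`,
and suppose `F` satisfies the distribution relation
`F(z) = m^k ∑_{ζ^m = z} F(ζ)` for all integers `m ≥ 1` and all `z` on the circle with `z ≠ 1`.
Then `a_n = a_1 / n^{k+1}` for all `n ≥ 1`; i.e. `F` is a scalar multiple of `L_{k+1}`. -/
theorem polylog_uniqueness (k : ℕ) (hk : 1 ≤ k) (a : ℕ → ℂ)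
    (hsum : Summable fun n : ℕ => ‖a n‖)
    (F : ℂ → ℝ)
    (hF : ∀ z : ℂ, F z = (∑' n : ℕ, a (n + 1) * z ^ (n + 1)).re)
    (hdist : ∀ m : ℕ, 1 ≤ m → ∀ z : ℂ, ‖z‖ = 1 → z ≠ 1 →
      F z = (m : ℝ) ^ k * ((Polynomial.nthRoots m z).map F).sum) :
    ∀ n : ℕ, 1 ≤ n → a n = a 1 / (n : ℂ) ^ (k + 1) :=
  polylog_uniqueness_general k a hsum F hF hdist
end
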